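/- Let F be a finite field, let d be an even positive integer, and let n = n1 + n2, k = a1 + a2 with a_i ≥ d/2 and a_i ≤ t_i ≤ n_i − a_i for i = 1,2. For i = 1,2 let D_i be a set of a_i × (n_i − t_i) matrices over F of rank a_i whose row spaces are pairwise distinct and satisfy dim(R(G) ∩ R(G')) ≤ a_i − d/2 for all distinct G, G' ∈ D_i. (Case 1) Let b1, b2 be positive integers with b1 + b2 ≥ d/2 and, for r = 1,…,s, let M_1^r be a1 × t1 matrices and M_2^r be a2 × t2 matrices such that rank(M_i^r − M_i^{r'}) ≥ b_i and M_i^r ≠ M_i^{r'} for all r ≠ r' and i = 1,2. Then the set E of row spaces of the k × n block matrices ( M_1^r, G_1, 0, 0 ; 0, 0, M_2^r, G_2 ) (row blocks a1, a2; column blocks t1, n1−t1, t2, n2−t2), for 1 ≤ r ≤ s, G_1 ∈ D_1, G_2 ∈ D_2, consists of s·|D_1|·|D_2| distinct k-dimensional subspaces of F^n with pairwise subspace distance ≥ d. (Case 2) If instead M_1 is a set of a1 × t1 matrices with pairwise rank distance ≥ d/2 and M_2 a set of a2 × t2 matrices with pairwise rank distance ≥ d/2, then the set E of row spaces of ( M_1,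 G_1, 0, 0 ; 0, 0, M_2, G_2 ) for M_i ∈ M_i and G_i ∈ D_i consists of |M_1|·|M_2|·|D_1|·|D_2| distinct k-dimensional subspaces of F^n with pairwise subspace distance ≥ d. -/

import Mathlib

open Matrix

/-- The row space of a matrix: the span of its rows, i.e. the range of `vecMul`. -/
noncomputable def rowSpace {F : Type*} [Field F] {m n : Type*} [Fintype m]
    (A : Matrix m n F) : Submodule F (n → F) :=
  LinearMap.range A.vecMulLinear

/-- The generator matrix `( M1, G1, 0, 0 ; 0, 0, M2, G2 )` with row blocks of sizes
`a1, a2` and column blocks of sizes `t1, p1, t2, p2`. -/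
def gen9 {F : Type*} [Field F] {a1 a2 t1 t2 p1 p2 : ℕ}
    (M1 : Matrix (Fin a1) (Fin t1) F) (G1 : Matrix (Fin a1) (Fin p1) F)
    (M2 : Matrix (Fin a2) (Fin t2) F) (G2 : Matrix (Fin a2) (Fin p2) F) :
    Matrix (Fin a1 ⊕ Fin a2) ((Fin t1 ⊕ Fin p1) ⊕ (Fin t2 ⊕ Fin p2)) F :=
  Matrix.fromBlocks (Matrix.fromCols M1 G1) 0 0 (Matrix.fromCols M2 G2)

/-!
The generator is block diagonal, so the intersection of two of the row spaces embeds, by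
restriction to the two column blocks, into the product of the intersections of the row spaces
of `(M₁ | G₁)` and of `(M₂ | G₂)`. In a block with `G ≠ G'`, restriction to the `G`-columns is
injective (`G` has full row rank) and bounds the intersection by `dim (R(G) ∩ R(G')) ≤ a - d/2`;
with `G = G'` both sides of a common vector have the same coefficients, which therefore lie in
the left kernel of `M - M'`, of dimension `a - rank (M - M')`. Summing over the blocks, distinct
parameters give intersections of dimension at most `k - d/2`: this is the distance bound, and
since `d > 0` it also makes the parametrisation injective, which gives the cardinality.
-/

open Module

def IsConstDimCode {F V : Type*} [Field F] [AddCommGroup V] [Module F V]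
    (E : Set (Submodule F V)) (k d : ℕ) : Prop :=
  (∀ U ∈ E, finrank F U = k) ∧ ∀ U ∈ E, ∀ W ∈ E, U ≠ W → d ≤ 2 * k - 2 * finrank F ↥(U ⊓ W)

section

variable {F : Type*} [Field F]

theorem isConstDimCode_image_of_finrank_inf_le {ι V : Type*} [AddCommGroup V] [Module F V]
    (f : ι → Submodule F V) {S : Set ι} {k δ : ℕ} (hδ : 0 < δ) (hδk : δ ≤ k)
    (hdim : ∀ x ∈ S, finrank F (f x) = k)
    (hinf : ∀ x ∈ S, ∀ y ∈ S, x ≠ y → finrank F ↥(f x ⊓ f y) ≤ k - δ) :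
    (f '' S).ncard = S.ncard ∧ IsConstDimCode (f '' S) k (2 * δ) := by
  refine ⟨Set.InjOn.ncard_image fun x hx y hy hxy => ?_, ?_, ?_⟩
  · by_contra hne
    have := hinf x hx y hy hne
    rw [hxy, inf_idem, hdim y hy] at this
    omega
  · rintro _ ⟨x, hx, rfl⟩
    exact hdim x hx
  · rintro _ ⟨x, hx, rfl⟩ _ ⟨y, hy, rfl⟩ hne
    have := hinf x hx y hy (fun h => hne (h ▸ rfl))
    omega

section RowSpace

variable {m n : Type*} [Fintype m]

theorem mem_rowSpace_iff {A : Matrix m n F} {x : n → F} :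
    x ∈ rowSpace A ↔ ∃ z, z ᵥ* A = x :=
  Iff.rfl

theorem finrank_rowSpace [Fintype n] (A : Matrix m n F) : finrank F (rowSpace A) = A.rank := by
  rw [rowSpace, ← mulVecLin_transpose, ← rank_transpose]
  rfl

theorem finrank_rowSpace_le (A : Matrix m n F) : finrank F (rowSpace A) ≤ Fintype.card m :=
  (LinearMap.finrank_range_le _).trans_eq (finrank_fintype_fun_eq_card F)

theorem finrank_rowSpace_inf_le [Fintype n] (A : Matrix m n F) (W : Submodule F (n → F)) :
    finrank F ↥(rowSpace A ⊓ W) ≤ Fintype.card m :=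
  (Submodule.finrank_mono inf_le_left).trans (finrank_rowSpace_le A)

theorem finrank_rowSpace_of_injective {A : Matrix m n F} (hA : Function.Injective A.vecMul) :
    finrank F (rowSpace A) = Fintype.card m :=
  (LinearMap.finrank_range_of_inj hA).trans (finrank_fintype_fun_eq_card F)

theorem vecMul_injective_of_rank_eq [Fintype n] {A : Matrix m n F}
    (h : A.rank = Fintype.card m) : Function.Injective A.vecMul :=
  vecMul_injective_iff.2 <| linearIndependent_iff_card_eq_finrank_span.2 <| by
    rw [← h, rank_eq_finrank_span_row]
    rfl

end RowSpace

section FromCols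

variable {m n₁ n₂ : Type*} [Fintype m]

theorem vecMul_fromCols_injective (M : Matrix m n₁ F) {G : Matrix m n₂ F}
    (hG : Function.Injective G.vecMul) : Function.Injective (fromCols M G).vecMul :=
  fun z z' h => hG <| funext fun j => by
    simpa [vecMul_fromCols] using congrFun h (Sum.inr j)

theorem mem_rowSpace_of_mem_rowSpace_fromCols {M : Matrix m n₁ F} {G : Matrix m n₂ F}
    {x : n₁ ⊕ n₂ → F} (hx : x ∈ rowSpace (fromCols M G)) :
    (fun j => x (Sum.inr j)) ∈ rowSpace G := by
  obtain ⟨z, rfl⟩ := mem_rowSpace_iff.1 hx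
  exact mem_rowSpace_iff.2 ⟨z, by simp [vecMul_fromCols]⟩

theorem finrank_rowSpace_fromCols_inf_le [Fintype n₂] (M M' : Matrix m n₁ F)
    {G : Matrix m n₂ F} (G' : Matrix m n₂ F) (hG : Function.Injective G.vecMul) :
    finrank F ↥(rowSpace (fromCols M G) ⊓ rowSpace (fromCols M' G')) ≤
      finrank F ↥(rowSpace G ⊓ rowSpace G') := by
  let π : (n₁ ⊕ n₂ → F) →ₗ[F] (n₂ → F) := LinearMap.funLeft F F Sum.inr
  have hπ : ∀ x ∈ rowSpace (fromCols M G) ⊓ rowSpace (fromCols M' G'),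
      π x ∈ rowSpace G ⊓ rowSpace G' := fun x hx =>
    ⟨mem_rowSpace_of_mem_rowSpace_fromCols hx.1, mem_rowSpace_of_mem_rowSpace_fromCols hx.2⟩
  refine LinearMap.finrank_le_finrank_of_injective (f := π.restrict hπ) fun x y hxy => ?_
  obtain ⟨z, hz⟩ := mem_rowSpace_iff.1 x.2.1
  obtain ⟨w, hw⟩ := mem_rowSpace_iff.1 y.2.1
  have hzw : z = w := hG <| funext fun j => by
    simpa [π, ← hz, ← hw, vecMul_fromCols] using congrFun (congrArg Subtype.val hxy) j
  exact Subtype.ext (hz.symm.trans (hzw ▸ hw))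

theorem finrank_rowSpace_fromCols_inf_fromCols_le [Fintype n₁]
    (M M' : Matrix m n₁ F) {G : Matrix m n₂ F} (hG : Function.Injective G.vecMul) :
    finrank F ↥(rowSpace (fromCols M G) ⊓ rowSpace (fromCols M' G)) ≤
      Fintype.card m - (M - M').rank := by
  have hle : rowSpace (fromCols M G) ⊓ rowSpace (fromCols M' G) ≤
      (LinearMap.ker (M - M').vecMulLinear).map (fromCols M G).vecMulLinear := by
    rintro x ⟨⟨z, rfl⟩, ⟨z', hz'⟩⟩
    simp only [vecMulLinear_apply, vecMul_fromCols, Sum.elim_eq_iff] at hz'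
    obtain rfl : z' = z := hG hz'.2
    exact ⟨z', by simp [hz'.1], rfl⟩
  have hker := (M - M').vecMulLinear.finrank_range_add_finrank_ker
  rw [← rowSpace, finrank_rowSpace, finrank_fintype_fun_eq_card] at hker
  calc finrank F ↥(rowSpace (fromCols M G) ⊓ rowSpace (fromCols M' G))
      _ ≤ finrank F ↥((LinearMap.ker (M - M').vecMulLinear).map (fromCols M G).vecMulLinear) :=
        Submodule.finrank_mono hle
      _ ≤ finrank F ↥(LinearMap.ker (M - M').vecMulLinear) := Submodule.finrank_map_le _ _
      _ = Fintype.card m - (M - M').rank := by omega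

end FromCols

section BlockDiagonal

variable {m₁ m₂ n₁ n₂ : Type*} [Fintype m₁] [Fintype m₂]

theorem finrank_le_add_of_comp_inl_inr {α β : Type*} [Fintype α] [Fintype β]
    {W : Submodule F (α ⊕ β → F)} {P : Submodule F (α → F)} {Q : Submodule F (β → F)}
    (hP : ∀ x ∈ W, (fun a => x (Sum.inl a)) ∈ P) (hQ : ∀ x ∈ W, (fun b => x (Sum.inr b)) ∈ Q) :
    finrank F W ≤ finrank F P + finrank F Q := by
  let φ : W →ₗ[F] P × Q :=
    ((LinearMap.funLeft F F Sum.inl).restrict hP).prod ((LinearMap.funLeft F F Sum.inr).restrict hQ)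
  have hφ : Function.Injective φ := fun x y hxy => by
    ext (a | b)
    · exact congrFun (congrArg (Subtype.val ∘ Prod.fst) hxy) a
    · exact congrFun (congrArg (Subtype.val ∘ Prod.snd) hxy) b
  exact (LinearMap.finrank_le_finrank_of_injective hφ).trans_eq finrank_prod

theorem mem_rowSpace_of_mem_rowSpace_fromBlocks {A : Matrix m₁ n₁ F} {B : Matrix m₂ n₂ F}
    {x : n₁ ⊕ n₂ → F} (hx : x ∈ rowSpace (fromBlocks A 0 0 B)) :
    (fun i => x (Sum.inl i)) ∈ rowSpace A ∧ (fun j => x (Sum.inr j)) ∈ rowSpace B := by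
  obtain ⟨z, rfl⟩ := mem_rowSpace_iff.1 hx
  exact ⟨mem_rowSpace_iff.2 ⟨z ∘ Sum.inl, by simp [vecMul_fromBlocks]⟩,
    mem_rowSpace_iff.2 ⟨z ∘ Sum.inr, by simp [vecMul_fromBlocks]⟩⟩

theorem finrank_rowSpace_fromBlocks_inf_le [Fintype n₁] [Fintype n₂]
    (A A' : Matrix m₁ n₁ F) (B B' : Matrix m₂ n₂ F) :
    finrank F ↥(rowSpace (fromBlocks A 0 0 B) ⊓ rowSpace (fromBlocks A' 0 0 B')) ≤
      finrank F ↥(rowSpace A ⊓ rowSpace A') + finrank F ↥(rowSpace B ⊓ rowSpace B') :=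
  finrank_le_add_of_comp_inl_inr
    (fun _ hx => ⟨(mem_rowSpace_of_mem_rowSpace_fromBlocks hx.1).1,
      (mem_rowSpace_of_mem_rowSpace_fromBlocks hx.2).1⟩)
    (fun _ hx => ⟨(mem_rowSpace_of_mem_rowSpace_fromBlocks hx.1).2,
      (mem_rowSpace_of_mem_rowSpace_fromBlocks hx.2).2⟩)

theorem vecMul_fromBlocks_injective {A : Matrix m₁ n₁ F} {B : Matrix m₂ n₂ F}
    (hA : Function.Injective A.vecMul) (hB : Function.Injective B.vecMul) :
    Function.Injective (fromBlocks A 0 0 B).vecMul := fun z z' h => by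
  simp only [vecMul_fromBlocks, vecMul_zero, add_zero, zero_add, Sum.elim_eq_iff] at h
  ext (i | j)
  · exact congrFun (hA h.1) i
  · exact congrFun (hB h.2) j

end BlockDiagonal

theorem le_rank_sub_add_rank_sub_of_ne {m₁ m₂ n₁ n₂ : Type*} [Fintype n₁] [Fintype n₂]
    {S₁ : Set (Matrix m₁ n₁ F)} {S₂ : Set (Matrix m₂ n₂ F)} {δ : ℕ}
    (h₁ : ∀ M ∈ S₁, ∀ M' ∈ S₁, M ≠ M' → δ ≤ (M - M').rank)
    (h₂ : ∀ M ∈ S₂, ∀ M' ∈ S₂, M ≠ M' → δ ≤ (M - M').rank) :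
    ∀ x ∈ S₁ ×ˢ S₂, ∀ y ∈ S₁ ×ˢ S₂, x ≠ y → δ ≤ (x.1 - y.1).rank + (x.2 - y.2).rank := by
  intro x hx y hy hne
  by_cases h : x.1 = y.1
  · exact (h₂ _ hx.2 _ hy.2 fun h' => hne (Prod.ext h h')).trans (Nat.le_add_left _ _)
  · exact (h₁ _ hx.1 _ hy.1 h).trans (Nat.le_add_right _ _)

section Gen9

variable {a1 a2 t1 t2 p1 p2 : ℕ}

theorem finrank_rowSpace_gen9 (M1 : Matrix (Fin a1) (Fin t1) F) {G1 : Matrix (Fin a1) (Fin p1) F}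
    (M2 : Matrix (Fin a2) (Fin t2) F) {G2 : Matrix (Fin a2) (Fin p2) F}
    (hG1 : Function.Injective G1.vecMul) (hG2 : Function.Injective G2.vecMul) :
    finrank F (rowSpace (gen9 M1 G1 M2 G2)) = a1 + a2 := by
  rw [gen9, finrank_rowSpace_of_injective (vecMul_fromBlocks_injective
    (vecMul_fromCols_injective M1 hG1) (vecMul_fromCols_injective M2 hG2))]
  simp

variable {D1 : Set (Matrix (Fin a1) (Fin p1) F)} {D2 : Set (Matrix (Fin a2) (Fin p2) F)} {δ : ℕ}
  (hδ1 : δ ≤ a1) (hδ2 : δ ≤ a2)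
  (hG1 : ∀ G ∈ D1, Function.Injective G.vecMul) (hG2 : ∀ G ∈ D2, Function.Injective G.vecMul)
  (hD1 : ∀ G ∈ D1, ∀ G' ∈ D1, G ≠ G' → finrank F ↥(rowSpace G ⊓ rowSpace G') ≤ a1 - δ)
  (hD2 : ∀ G ∈ D2, ∀ G' ∈ D2, G ≠ G' → finrank F ↥(rowSpace G ⊓ rowSpace G') ≤ a2 - δ)
include hδ1 hδ2 hG1 hG2 hD1 hD2

theorem finrank_rowSpace_gen9_inf_le {M1 M1' : Matrix (Fin a1) (Fin t1) F}
    {M2 M2' : Matrix (Fin a2) (Fin t2) F} {G1 G1' G2 G2'} (h1 : G1 ∈ D1) (h1' : G1' ∈ D1)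
    (h2 : G2 ∈ D2) (h2' : G2' ∈ D2)
    (hM : G1 = G1' → G2 = G2' → δ ≤ (M1 - M1').rank + (M2 - M2').rank) :
    finrank F ↥(rowSpace (gen9 M1 G1 M2 G2) ⊓ rowSpace (gen9 M1' G1' M2' G2')) ≤ a1 + a2 - δ := by
  refine (finrank_rowSpace_fromBlocks_inf_le _ _ _ _).trans ?_
  have hle1 := finrank_rowSpace_inf_le (fromCols M1 G1) (rowSpace (fromCols M1' G1'))
  have hle2 := finrank_rowSpace_inf_le (fromCols M2 G2) (rowSpace (fromCols M2' G2'))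
  simp only [Fintype.card_fin] at hle1 hle2
  by_cases e1 : G1 = G1'
  · by_cases e2 : G2 = G2'
    · subst e1 e2
      have hA1 := finrank_rowSpace_fromCols_inf_fromCols_le M1 M1' (hG1 G1 h1)
      have hA2 := finrank_rowSpace_fromCols_inf_fromCols_le M2 M2' (hG2 G2 h2)
      have hr1 := (M1 - M1').rank_le_card_height
      have hr2 := (M2 - M2').rank_le_card_height
      simp only [Fintype.card_fin] at hA1 hA2 hr1 hr2
      have := hM rfl rfl
      omega
    · have := (finrank_rowSpace_fromCols_inf_le M2 M2' G2' (hG2 G2 h2)).trans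
        (hD2 G2 h2 G2' h2' e2)
      omega
  · have := (finrank_rowSpace_fromCols_inf_le M1 M1' G1' (hG1 G1 h1)).trans
      (hD1 G1 h1 G1' h1' e1)
    omega

theorem isConstDimCode_image_gen9 {ι : Type*} (M1f : ι → Matrix (Fin a1) (Fin t1) F)
    (M2f : ι → Matrix (Fin a2) (Fin t2) F) {T : Set ι} (hδ : 0 < δ)
    (hM : ∀ x ∈ T, ∀ y ∈ T, x ≠ y → δ ≤ (M1f x - M1f y).rank + (M2f x - M2f y).rank) :
    let f := fun x : ι × Matrix (Fin a1) (Fin p1) F × Matrix (Fin a2) (Fin p2) F =>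
      rowSpace (gen9 (M1f x.1) x.2.1 (M2f x.1) x.2.2)
    (f '' (T ×ˢ D1 ×ˢ D2)).ncard = T.ncard * D1.ncard * D2.ncard ∧
      IsConstDimCode (f '' (T ×ˢ D1 ×ˢ D2)) (a1 + a2) (2 * δ) := by
  intro f
  rw [mul_assoc, ← Set.ncard_prod, ← Set.ncard_prod]
  refine isConstDimCode_image_of_finrank_inf_le f hδ (by omega) ?_ ?_
  · rintro ⟨x, G1, G2⟩ ⟨-, h1, h2⟩
    exact finrank_rowSpace_gen9 _ _ (hG1 G1 h1) (hG2 G2 h2)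
  · rintro ⟨x, G1, G2⟩ ⟨hx, h1, h2⟩ ⟨y, G1', G2'⟩ ⟨hy, h1', h2'⟩ hne
    refine finrank_rowSpace_gen9_inf_le hδ1 hδ2 hG1 hG2 hD1 hD2 h1 h1' h2 h2'
      fun e1 e2 => hM x hx y hy ?_
    rintro rfl
    exact hne (Prod.ext rfl (Prod.ext e1 e2))

end Gen9

end

theorem parallel_multiple_blocks_construction_general
    (F : Type*) [Field F] (d n1 n2 a1 a2 t1 t2 k s b1 b2 : ℕ)
    (hd : 0 < d) (hd2 : 2 ∣ d) (hk : a1 + a2 = k)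
    (ha1 : d / 2 ≤ a1) (ha2 : d / 2 ≤ a2)
    (hb : d / 2 ≤ b1 + b2)
    (D1 : Set (Matrix (Fin a1) (Fin (n1 - t1)) F))
    (D2 : Set (Matrix (Fin a2) (Fin (n2 - t2)) F))
    (hD1rank : ∀ G ∈ D1, G.rank = a1)
    (hD1 : ∀ G ∈ D1, ∀ G' ∈ D1, G ≠ G' →
      rowSpace G ≠ rowSpace G' ∧
        Module.finrank F ↥(rowSpace G ⊓ rowSpace G') ≤ a1 - d / 2)
    (hD2rank : ∀ G ∈ D2, G.rank = a2)
    (hD2 : ∀ G ∈ D2, ∀ G' ∈ D2, G ≠ G' →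
      rowSpace G ≠ rowSpace G' ∧
        Module.finrank F ↥(rowSpace G ⊓ rowSpace G') ≤ a2 - d / 2)
    -- Case 1 data: families of single matrices indexed by `Fin s`
    (M1f : Fin s → Matrix (Fin a1) (Fin t1) F)
    (M2f : Fin s → Matrix (Fin a2) (Fin t2) F)
    (hM1f : ∀ r r', r ≠ r' → M1f r ≠ M1f r' ∧ b1 ≤ (M1f r - M1f r').rank)
    (hM2f : ∀ r r', r ≠ r' → M2f r ≠ M2f r' ∧ b2 ≤ (M2f r - M2f r').rank)
    -- Case 2 data: sets of matrices with pairwise rank distance ≥ d/2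
    (𝓜1 : Set (Matrix (Fin a1) (Fin t1) F)) (𝓜2 : Set (Matrix (Fin a2) (Fin t2) F))
    (h𝓜1 : ∀ M ∈ 𝓜1, ∀ M' ∈ 𝓜1, M ≠ M' → d / 2 ≤ (M - M').rank)
    (h𝓜2 : ∀ M ∈ 𝓜2, ∀ M' ∈ 𝓜2, M ≠ M' → d / 2 ≤ (M - M').rank) :
    -- Case 1 conclusion
    (let E : Set (Submodule F ((Fin t1 ⊕ Fin (n1 - t1)) ⊕ (Fin t2 ⊕ Fin (n2 - t2)) → F)) :=
      {U | ∃ r : Fin s, ∃ G1 ∈ D1, ∃ G2 ∈ D2, U = rowSpace (gen9 (M1f r) G1 (M2f r) G2)}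
     E.ncard = s * D1.ncard * D2.ncard ∧
     (∀ U ∈ E, Module.finrank F ↥U = k) ∧
     (∀ U ∈ E, ∀ V ∈ E, U ≠ V → d ≤ 2 * k - 2 * Module.finrank F ↥(U ⊓ V))) ∧
    -- Case 2 conclusion
    (let E : Set (Submodule F ((Fin t1 ⊕ Fin (n1 - t1)) ⊕ (Fin t2 ⊕ Fin (n2 - t2)) → F)) :=
      {U | ∃ M1 ∈ 𝓜1, ∃ M2 ∈ 𝓜2, ∃ G1 ∈ D1, ∃ G2 ∈ D2, U = rowSpace (gen9 M1 G1 M2 G2)}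
     E.ncard = 𝓜1.ncard * 𝓜2.ncard * D1.ncard * D2.ncard ∧
     (∀ U ∈ E, Module.finrank F ↥U = k) ∧
     (∀ U ∈ E, ∀ V ∈ E, U ≠ V → d ≤ 2 * k - 2 * Module.finrank F ↥(U ⊓ V))) := by
  have hδ : 0 < d / 2 := by omega
  have hG1 : ∀ G ∈ D1, Function.Injective G.vecMul := fun G hG =>
    vecMul_injective_of_rank_eq (by simp [hD1rank G hG])
  have hG2 : ∀ G ∈ D2, Function.Injective G.vecMul := fun G hG =>
    vecMul_injective_of_rank_eq (by simp [hD2rank G hG])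
  have hD1' := fun G (hG : G ∈ D1) G' (hG' : G' ∈ D1) hne => (hD1 G hG G' hG' hne).2
  have hD2' := fun G (hG : G ∈ D2) G' (hG' : G' ∈ D2) hne => (hD2 G hG G' hG' hne).2
  subst hk
  rw [← Nat.mul_div_cancel' hd2]
  refine ⟨?_, ?_⟩
  · obtain ⟨hcard, hcode⟩ := isConstDimCode_image_gen9 ha1 ha2 hG1 hG2 hD1' hD2' M1f M2f
      (T := Set.univ) hδ fun r _ r' _ hne =>
        hb.trans (add_le_add (hM1f r r' hne).2 (hM2f r r' hne).2)
    have hE : {U | ∃ r : Fin s, ∃ G1 ∈ D1, ∃ G2 ∈ D2, U = rowSpace (gen9 (M1f r) G1 (M2f r) G2)} =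
        (fun x : Fin s × _ × _ => rowSpace (gen9 (M1f x.1) x.2.1 (M2f x.1) x.2.2)) ''
          (Set.univ ×ˢ D1 ×ˢ D2) := by
      ext; simp [eq_comm, and_assoc]
    dsimp only
    rw [hE, hcard, Set.ncard_univ, Nat.card_fin]
    exact ⟨rfl, hcode⟩
  · obtain ⟨hcard, hcode⟩ := isConstDimCode_image_gen9 ha1 ha2 hG1 hG2 hD1' hD2' Prod.fst Prod.snd
      (T := 𝓜1 ×ˢ 𝓜2) hδ (le_rank_sub_add_rank_sub_of_ne h𝓜1 h𝓜2)
    have hE : {U | ∃ M1 ∈ 𝓜1, ∃ M2 ∈ 𝓜2, ∃ G1 ∈ D1, ∃ G2 ∈ D2, U = rowSpace (gen9 M1 G1 M2 G2)} =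
        (fun x : (_ × _) × _ × _ => rowSpace (gen9 x.1.1 x.2.1 x.1.2 x.2.2)) ''
          ((𝓜1 ×ˢ 𝓜2) ×ˢ D1 ×ˢ D2) := by
      ext; simp [eq_comm, and_assoc]
    dsimp only
    rw [hE, hcard, Set.ncard_prod]
    exact ⟨rfl, hcode⟩

/-- the parallel multiple blocks construction (Theorem 2.7), both cases:
row spaces of `( M1, G1, 0, 0 ; 0, 0, M2, G2 )` form constant dimension codes of the
stated cardinalities with subspace distance at least `d`. -/
theorem parallel_multiple_blocks_construction
    (F : Type*) [Field F] [Fintype F] (d n1 n2 a1 a2 t1 t2 k s b1 b2 : ℕ)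
    (hd : 0 < d) (hd2 : 2 ∣ d) (hs : 0 < s) (hk : a1 + a2 = k)
    (ha1 : d / 2 ≤ a1) (ha2 : d / 2 ≤ a2)
    (ht1 : a1 ≤ t1) (ht1' : t1 ≤ n1 - a1) (ht2 : a2 ≤ t2) (ht2' : t2 ≤ n2 - a2)
    (hb : d / 2 ≤ b1 + b2) (hb1 : 0 < b1) (hb2 : 0 < b2)
    (D1 : Set (Matrix (Fin a1) (Fin (n1 - t1)) F))
    (D2 : Set (Matrix (Fin a2) (Fin (n2 - t2)) F))
    (hD1rank : ∀ G ∈ D1, G.rank = a1)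
    (hD1 : ∀ G ∈ D1, ∀ G' ∈ D1, G ≠ G' →
      rowSpace G ≠ rowSpace G' ∧
        Module.finrank F ↥(rowSpace G ⊓ rowSpace G') ≤ a1 - d / 2)
    (hD2rank : ∀ G ∈ D2, G.rank = a2)
    (hD2 : ∀ G ∈ D2, ∀ G' ∈ D2, G ≠ G' →
      rowSpace G ≠ rowSpace G' ∧
        Module.finrank F ↥(rowSpace G ⊓ rowSpace G') ≤ a2 - d / 2)
    -- Case 1 data: families of single matrices indexed by `Fin s`
    (M1f : Fin s → Matrix (Fin a1) (Fin t1) F)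
    (M2f : Fin s → Matrix (Fin a2) (Fin t2) F)
    (hM1f : ∀ r r', r ≠ r' → M1f r ≠ M1f r' ∧ b1 ≤ (M1f r - M1f r').rank)
    (hM2f : ∀ r r', r ≠ r' → M2f r ≠ M2f r' ∧ b2 ≤ (M2f r - M2f r').rank)
    -- Case 2 data: sets of matrices with pairwise rank distance ≥ d/2
    (𝓜1 : Set (Matrix (Fin a1) (Fin t1) F)) (𝓜2 : Set (Matrix (Fin a2) (Fin t2) F))
    (h𝓜1 : ∀ M ∈ 𝓜1, ∀ M' ∈ 𝓜1, M ≠ M' → d / 2 ≤ (M - M').rank)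
    (h𝓜2 : ∀ M ∈ 𝓜2, ∀ M' ∈ 𝓜2, M ≠ M' → d / 2 ≤ (M - M').rank) :
    -- Case 1 conclusion
    (let E : Set (Submodule F ((Fin t1 ⊕ Fin (n1 - t1)) ⊕ (Fin t2 ⊕ Fin (n2 - t2)) → F)) :=
      {U | ∃ r : Fin s, ∃ G1 ∈ D1, ∃ G2 ∈ D2, U = rowSpace (gen9 (M1f r) G1 (M2f r) G2)}
     E.ncard = s * D1.ncard * D2.ncard ∧
     (∀ U ∈ E, Module.finrank F ↥U = k) ∧
     (∀ U ∈ E, ∀ V ∈ E, U ≠ V → d ≤ 2 * k - 2 * Module.finrank F ↥(U ⊓ V))) ∧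
    -- Case 2 conclusion
    (let E : Set (Submodule F ((Fin t1 ⊕ Fin (n1 - t1)) ⊕ (Fin t2 ⊕ Fin (n2 - t2)) → F)) :=
      {U | ∃ M1 ∈ 𝓜1, ∃ M2 ∈ 𝓜2, ∃ G1 ∈ D1, ∃ G2 ∈ D2, U = rowSpace (gen9 M1 G1 M2 G2)}
     E.ncard = 𝓜1.ncard * 𝓜2.ncard * D1.ncard * D2.ncard ∧
     (∀ U ∈ E, Module.finrank F ↥U = k) ∧
     (∀ U ∈ E, ∀ V ∈ E, U ≠ V → d ≤ 2 * k - 2 * Module.finrank F ↥(U ⊓ V))) :=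
  parallel_multiple_blocks_construction_general F d n1 n2 a1 a2 t1 t2 k s b1 b2 hd hd2 hk ha1 ha2 hb
    D1 D2 hD1rank hD1 hD2rank hD2 M1f M2f hM1f hM2f 𝓜1 𝓜2 h𝓜1 h𝓜2
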